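/- If x and y are reordered computable real numbers, then the sum x + y is reordered computable. -/

import Mathlib

open Filter

/-- A function `f : ℕ → ℕ` tends to infinity. -/
def TendsToInfinity (f : ℕ → ℕ) : Prop := ∀ c : ℕ, ∃ m : ℕ, ∀ k ≥ m, c < f k

/-- `uf f n` is the number of `k` with `f k = n`. -/
noncomputable def uf (f : ℕ → ℕ) (n : ℕ) : ℕ := Nat.card {k : ℕ | f k = n}

/-- A series of reals converges computably: it has a limit together with a computable
modulus of convergence for the sequence of partial sums. -/
def ConvergesComputably (a : ℕ → ℝ) : Prop :=
  ∃ (x : ℝ) (s : ℕ → ℕ), Computable s ∧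
    ∀ n : ℕ, ∀ m ≥ s n, |x - ∑ k ∈ Finset.range m, a k| ≤ (2:ℝ)^(-(n:ℤ))

/-- `f` is a name for `x` if `∑_k 2^{-f k} = x`. -/
def IsName (f : ℕ → ℕ) (x : ℝ) : Prop := HasSum (fun k => (2:ℝ)^(-(f k : ℤ))) x

/-- A real is reordered computable if it has a computable name `f` such that
`∑_k (uf f k)·2^{-k}` converges computably. -/
def ReorderedComputable (x : ℝ) : Prop :=
  ∃ f : ℕ → ℕ, Computable f ∧ IsName f x ∧
    ConvergesComputably (fun k => (uf f k : ℝ) * (2:ℝ)^(-(k:ℤ)))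

/-- A real is left-computable if some computable strictly increasing sequence of
rationals converges to it. -/
def LeftComputable (x : ℝ) : Prop :=
  ∃ q : ℕ → ℚ, Computable q ∧ StrictMono q ∧
    Tendsto (fun n => (q n : ℝ)) atTop (nhds x)

/-- A real is computably approximable if some computable sequence of rationals
converges to it. -/
def ComputablyApproximable (x : ℝ) : Prop :=
  ∃ q : ℕ → ℚ, Computable q ∧ Tendsto (fun n => (q n : ℝ)) atTop (nhds x)

/-- A real is computable if some computable sequence of rationals approximates it
with error at most `2^{-n}`. -/
def ComputableReal (x : ℝ) : Prop :=
  ∃ q : ℕ → ℚ, Computable q ∧ ∀ n : ℕ, |x - (q n : ℝ)| ≤ (2:ℝ)^(-(n:ℤ))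

/-- Solovay reducibility on left-computable reals. -/
def SolovayReducible (x y : ℝ) : Prop :=
  ∀ yq : ℕ → ℚ, Computable yq → StrictMono yq →
    Tendsto (fun n => (yq n : ℝ)) atTop (nhds y) →
    ∃ xq : ℕ → ℚ, Computable xq ∧ StrictMono xq ∧
      Tendsto (fun n => (xq n : ℝ)) atTop (nhds x) ∧
      ∃ c : ℝ, 0 < c ∧ ∀ n : ℕ, x - (xq n : ℝ) ≤ c * (y - (yq n : ℝ))

/-- A set of naturals is computably enumerable: empty or the range of a computable function. -/
def CE (A : Set ℕ) : Prop := A = ∅ ∨ ∃ f : ℕ → ℕ, Computable f ∧ A = Set.range f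

/-- `xA A = ∑_{n ∈ A} 2^{-(n+1)}`. -/
noncomputable def xA (A : Set ℕ) : ℝ := ∑' n : A, (2:ℝ)^(-((n : ℕ) : ℤ) - 1)

/-- A real is strongly left-computable if it equals `xA A` for a c.e. set `A`. -/
def StronglyLeftComputable (x : ℝ) : Prop := ∃ A : Set ℕ, CE A ∧ xA A = x

/-- A real is regular if it is a finite sum of strongly left-computable reals. -/
def Regular (x : ℝ) : Prop :=
  ∃ (n : ℕ) (s : Fin n → ℝ), (∀ i, StronglyLeftComputable (s i)) ∧ (∑ i, s i) = x

/-- An infinite set of naturals is immune if it has no infinite c.e. subset. -/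
def Immune (A : Set ℕ) : Prop :=
  A.Infinite ∧ ∀ B : Set ℕ, B ⊆ A → B.Infinite → ¬ CE B

/-- A real is nearly computable if some computable sequence of rationals converges to it
such that along every computable strictly increasing function the consecutive differences
converge with a computable modulus of convergence. -/
def NearlyComputable (x : ℝ) : Prop :=
  ∃ q : ℕ → ℚ, Computable q ∧ Tendsto (fun n => (q n : ℝ)) atTop (nhds x) ∧
    ∀ s : ℕ → ℕ, Computable s → StrictMono s →
      ∃ (L : ℝ) (m : ℕ → ℕ), Computable m ∧
        ∀ n : ℕ, ∀ k ≥ m n, |((q (s (k+1)) : ℝ) - (q (s k) : ℝ)) - L| ≤ (2:ℝ)^(-(n:ℤ))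

/-- A real is regainingly approximable if some computable strictly increasing sequence of
rationals converges to it and comes `2^{-n}`-close infinitely often. -/
def RegaininglyApproximable (x : ℝ) : Prop :=
  ∃ q : ℕ → ℚ, Computable q ∧ StrictMono q ∧
    Tendsto (fun n => (q n : ℝ)) atTop (nhds x) ∧
    ∀ m : ℕ, ∃ n ≥ m, x - (q n : ℝ) ≤ (2:ℝ)^(-(n:ℤ))

/-- `limsup_n (a n)^{1/n}`, computed in the extended nonnegative reals. -/
noncomputable def rootLimsup (a : ℕ → ℕ) : ENNReal :=
  Filter.limsup (fun n => (a n : ENNReal) ^ (1 / (n:ℝ))) Filter.atTop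

/-- The characteristic dyadic value of `x`: the infimum of `rootLimsup (uf f)` over all
computable names `f` for `x`. -/
noncomputable def varsigma (x : ℝ) : ENNReal :=
  ⨅ (f : ℕ → ℕ) (_ : Computable f ∧ IsName f x), rootLimsup (uf f)

/-!
Merge computable names `f` of `x` and `g` of `y` into the single name of `x + y` that reads `f` on
the even and `g` on the odd positions. It is computable, its terms still sum to `x + y`, and every
value `n` is hit `uf f n + uf g n` times, so its series `∑ uf · 2^{-k}` is the termwise sum of those of
`f` and `g`, and halving the error budget combines the two computable moduli into one.
-/

theorem IsName.finite_fiber {f : ℕ → ℕ} {x : ℝ} (hf : IsName f x) (n : ℕ) :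
    {k | f k = n}.Finite := by
  have hsmall : ∀ᶠ k in cofinite, (2:ℝ) ^ (-(f k : ℤ)) < 2 ^ (-(n : ℤ)) :=
    hf.summable.tendsto_cofinite_zero.eventually_lt_const (by positivity)
  exact (eventually_cofinite.1 hsmall).subset fun k (hkn : f k = n) => by simp [hkn]

theorem ConvergesComputably.add {a b : ℕ → ℝ} (ha : ConvergesComputably a)
    (hb : ConvergesComputably b) : ConvergesComputably (a + b) := by
  obtain ⟨x, s, hs, hsx⟩ := ha
  obtain ⟨y, t, ht, hty⟩ := hb
  refine ⟨x + y, fun n => s (n + 1) + t (n + 1), ?_, fun n m hm => ?_⟩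
  · exact Primrec.nat_add.to_comp.comp (hs.comp Computable.succ) (ht.comp Computable.succ)
  have hx := hsx (n + 1) m (le_of_add_le_left hm)
  have hy := hty (n + 1) m (le_of_add_le_right hm)
  have hsplit : (2:ℝ) ^ (-(n : ℤ)) = 2 ^ (-((n + 1 : ℕ) : ℤ)) + 2 ^ (-((n + 1 : ℕ) : ℤ)) := by
    rw [← two_mul, Nat.cast_succ, neg_add, zpow_add₀ two_ne_zero, mul_comm, mul_assoc]; norm_num
  calc |x + y - ∑ k ∈ Finset.range m, (a + b) k|
      = |(x - ∑ k ∈ Finset.range m, a k) + (y - ∑ k ∈ Finset.range m, b k)| := by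
        simp only [Pi.add_apply, Finset.sum_add_distrib]; congr 1; ring
    _ ≤ _ := abs_add_le _ _
    _ ≤ _ := hsplit ▸ add_le_add hx hy

-- The standard enumeration of `ℕ ⊕ ℕ` sends `2 * k` to `inl k` and `2 * k + 1` to `inr k`.
def interleave (f g : ℕ → ℕ) (k : ℕ) : ℕ := Sum.elim f g (Denumerable.ofNat (ℕ ⊕ ℕ) k)

theorem computable_interleave {f g : ℕ → ℕ} (hf : Computable f) (hg : Computable g) :
    Computable (interleave f g) := by
  have helim : Computable (Sum.elim f g) :=
    Computable.sumCasesOn Computable.id (hf.comp Computable.snd).to₂ (hg.comp Computable.snd).to₂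
  exact helim.comp (Computable.ofNat _)

theorem isName_interleave {f g : ℕ → ℕ} {x y : ℝ} (hf : IsName f x) (hg : IsName g y) :
    IsName (interleave f g) (x + y) :=
  (Denumerable.eqv (ℕ ⊕ ℕ)).symm.hasSum_iff
    (f := fun s => (2:ℝ) ^ (-((Sum.elim f g s : ℕ) : ℤ))) |>.2 (HasSum.sum hf hg)

theorem uf_interleave {f g : ℕ → ℕ} (hf : ∀ n, {k | f k = n}.Finite)
    (hg : ∀ n, {k | g k = n}.Finite) (n : ℕ) :
    uf (interleave f g) n = uf f n + uf g n := by
  have := (hf n).to_subtype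
  have := (hg n).to_subtype
  rw [uf, uf, uf, ← Nat.card_sum]
  exact Nat.card_congr (((Denumerable.eqv (ℕ ⊕ ℕ)).symm.subtypeEquiv
    (p := fun k => interleave f g k = n) (q := fun s => Sum.elim f g s = n) fun _ => Iff.rfl).trans
    Equiv.subtypeSum)

/-- reordered computable reals are closed under addition. -/
theorem stmt8 (x y : ℝ) (hx : ReorderedComputable x) (hy : ReorderedComputable y) :
    ReorderedComputable (x + y) := by
  obtain ⟨f, hfc, hfx, hf⟩ := hx
  obtain ⟨g, hgc, hgy, hg⟩ := hy
  refine ⟨interleave f g, computable_interleave hfc hgc, isName_interleave hfx hgy, ?_⟩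
  convert hf.add hg using 2 with k
  rw [uf_interleave hfx.finite_fiber hgy.finite_fiber, Pi.add_apply, Nat.cast_add, add_mul]
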